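/- arXiv:2307.11362 — 8 statements merged into one kernel-verified Lean document; each statement's English description precedes it below -/
import Mathlib

section
/- In any OBCI-algebra X, the exchange law z→(y→x) = y→(z→x) holds for all x, y, z in X. -/
structure OBCI (X : Type*) where
  imp : X → X → X
  e : X
  le : X → X → Prop
  ax1 : ∀ x y z, le e (imp (imp x y) (imp (imp y z) (imp x z)))
  ax2 : ∀ x y, le e (imp x (imp (imp x y) y))
  ax3 : ∀ x, le e (imp x x)
  ax4 : ∀ x y, le e (imp x y) → le e (imp y x) → x = y
  ax5 : ∀ x y, le x y ↔ le e (imp x y)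
  ax6 : ∀ x y, le e x → le x y → le e y

theorem stmt_1 {X : Type*} (A : OBCI X) :
    ∀ x y z : X, A.imp z (A.imp y x) = A.imp y (A.imp z x) := by
  have mp : ∀ a b : X, A.le A.e a → A.le A.e (A.imp a b) → A.le A.e b := by
    intro a b ha hab
    exact A.ax6 a b ha ((A.ax5 a b).mpr hab)
  have trans : ∀ a b c : X, A.le A.e (A.imp a b) → A.le A.e (A.imp b c) →
      A.le A.e (A.imp a c) := by
    intro a b c h1 h2
    exact mp _ _ h2 (mp _ _ h1 (A.ax1 a b c))
  have C : ∀ a b c : X, A.le A.e (A.imp (A.imp a (A.imp b c)) (A.imp b (A.imp a c))) := by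
    intro a b c
    have h1 := A.ax1 a (A.imp b c) c
    have h3 : A.le A.e (A.imp (A.imp (A.imp (A.imp b c) c) (A.imp a c)) (A.imp b (A.imp a c))) :=
      mp _ _ (A.ax2 b c) (A.ax1 b (A.imp (A.imp b c) c) (A.imp a c))
    exact trans _ _ _ h1 h3
  intro x y z
  exact A.ax4 _ _ (C z y x) (C y z x)
end

section
/- In any OBCI-algebra X, the relation ≤ is transitive: if e ≤ x→y and e ≤ y→z then e ≤ x→z. -/
theorem stmt_3 {X : Type*} (A : OBCI X) :
    ∀ x y z : X, A.le A.e (A.imp x y) → A.le A.e (A.imp y z) → A.le A.e (A.imp x z) := by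
  intro x y z hxy hyz
  have h1 := A.ax1 x y z
  have h2 : A.le A.e (A.imp (A.imp y z) (A.imp x z)) :=
    A.ax6 _ _ hxy ((A.ax5 _ _).mpr h1)
  exact A.ax6 _ _ hyz ((A.ax5 _ _).mpr h2)
end

section
/- In any OBCI-algebra X, if e ≤ x→y then e ≤ (z→x)→(z→y) for all x, y, z in X. -/
theorem stmt_5 {X : Type*} (A : OBCI X) :
    ∀ x y z : X, A.le A.e (A.imp x y) → A.le A.e (A.imp (A.imp z x) (A.imp z y)) := by
  -- transitivity helper
  have tr : ∀ a b c : X, A.le A.e (A.imp a b) → A.le A.e (A.imp b c) →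
      A.le A.e (A.imp a c) := by
    intro a b c hab hbc
    have h1 : A.le (A.imp a b) (A.imp (A.imp b c) (A.imp a c)) :=
      (A.ax5 _ _).mpr (A.ax1 a b c)
    have h2 : A.le A.e (A.imp (A.imp b c) (A.imp a c)) := A.ax6 _ _ hab h1
    exact A.ax6 _ _ hbc ((A.ax5 _ _).mpr h2)
  intro x y z hxy
  -- z→x ≤ (x→y)→(z→y)
  have h1 : A.le A.e (A.imp (A.imp z x) (A.imp (A.imp x y) (A.imp z y))) := A.ax1 z x y
  -- (x→y)→(z→y) ≤ z→y since e ≤ x→y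
  have h2 : A.le A.e (A.imp (A.imp (A.imp x y) (A.imp z y)) (A.imp z y)) :=
    A.ax6 _ _ hxy ((A.ax5 _ _).mpr (A.ax2 (A.imp x y) (A.imp z y)))
  exact tr _ _ _ h1 h2
end

section
/- If F is an ordered filter of an OBCI-algebra X satisfying the condition that x ∈ F implies e ≤ x, then F is a filter of X. -/
theorem stmt_6 {X : Type*} (A : OBCI X) (F : Set X)
    (he : A.e ∈ F)
    (hOF : ∀ x y : X, x ∈ F → A.le A.e (A.imp x y) → y ∈ F)
    (hcond : ∀ x : X, x ∈ F → A.le A.e x) :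
    A.e ∈ F ∧ ∀ x y : X, A.imp x y ∈ F → x ∈ F → y ∈ F := by
  refine ⟨he, fun x y hxy hx => ?_⟩
  have h1 : A.imp (A.imp x y) y ∈ F :=
    hOF x (A.imp (A.imp x y) y) hx (A.ax2 x y)
  exact hOF (A.imp x y) y hxy (hcond _ h1)
end

section
/- Let f: X → Y be an ordered homomorphism between OBCI-algebras. If ker(f) is a subalgebra of X, then for every x ∈ X with f(e_X) ≤_Y f(x), one has x →_X e_X ∈ ker(f). -/
theorem stmt_10 {X Y : Type*} (A : OBCI X) (B : OBCI Y) (f : X → Y)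
    (hom : ∀ x y : X, f (A.imp x y) = B.imp (f x) (f y))
    (omap : ∀ x y : X, A.le A.e (A.imp x y) → B.le B.e (B.imp (f x) (f y)))
    (hsub : ∀ x y : X, x ∈ {z : X | B.le B.e (f z)} → y ∈ {z : X | B.le B.e (f z)} →
      A.imp x y ∈ {z : X | B.le B.e (f z)}) :
    ∀ x : X, B.le (f A.e) (f x) → A.imp x A.e ∈ {z : X | B.le B.e (f z)} := by
  intro x hx
  set a := f A.e with ha
  set b := f x with hb
  -- X-theorem 1 : e ≤ e → (e → e)
  have thm1 : A.le A.e (A.imp A.e (A.imp A.e A.e)) :=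
    (A.ax5 A.e (A.imp A.e A.e)).mp (A.ax3 A.e)
  -- X-theorem 2 : e ≤ (e → e) → e
  have thm2 : A.le A.e (A.imp (A.imp A.e A.e) A.e) :=
    (A.ax5 A.e (A.imp (A.imp A.e A.e) A.e)).mpr (A.ax2 A.e A.e)
  -- images
  have h1 : B.le B.e (B.imp a (B.imp a a)) := by
    have := omap A.e (A.imp A.e A.e) thm1
    rwa [hom] at this
  have h2 : B.le B.e (B.imp (B.imp a a) a) := by
    have := omap (A.imp A.e A.e) A.e thm2
    rwa [hom] at this
  have haa : B.imp a a = a := B.ax4 (B.imp a a) a h2 h1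
  -- e ∈ ker
  have hea : B.le B.e a := by
    have := B.ax3 a
    rwa [haa] at this
  -- x ∈ ker
  have hab : B.le B.e (B.imp a b) := (B.ax5 a b).mp hx
  have hassert : B.le B.e (B.imp a (B.imp (B.imp a b) b)) := B.ax2 a b
  have h3 : B.le B.e (B.imp (B.imp a b) b) :=
    B.ax6 a (B.imp (B.imp a b) b) hea ((B.ax5 a (B.imp (B.imp a b) b)).mpr hassert)
  have heb : B.le B.e b :=
    B.ax6 (B.imp a b) b hab ((B.ax5 (B.imp a b) b).mpr h3)
  exact hsub x A.e heb hea
end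

section
/- Let f: X → Y be an ordered homomorphism between OBCI-algebras with f(e_X) = e_Y. If ker(f) satisfies: for all x, f(e_X) ≤_Y f(x) implies x →_X e_X ∈ ker(f), then ker(f) is a subalgebra of X (i.e., closed under →_X). -/
theorem stmt_11 {X Y : Type*} (A : OBCI X) (B : OBCI Y) (f : X → Y)
    (hom : ∀ x y : X, f (A.imp x y) = B.imp (f x) (f y))
    (omap : ∀ x y : X, A.le A.e (A.imp x y) → B.le B.e (B.imp (f x) (f y)))
    (he : f A.e = B.e)
    (hcond : ∀ x : X, B.le (f A.e) (f x) → A.imp x A.e ∈ {z : X | B.le B.e (f z)}) :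
    ∀ x y : X, x ∈ {z : X | B.le B.e (f z)} → y ∈ {z : X | B.le B.e (f z)} →
      A.imp x y ∈ {z : X | B.le B.e (f z)} := by
  intro x y hx hy
  simp only [Set.mem_setOf_eq] at *
  -- e ≤ f x, so hcond gives e ≤ f (x → e) = f x → e
  have hfx : B.le (f A.e) (f x) := by rw [he]; exact hx
  have h1 : B.le B.e (B.imp (f x) B.e) := by
    have := hcond x hfx
    simpa [hom, he] using this
  -- e ≤ f y gives e ≤ e → f y
  have h2 : B.le B.e (B.imp B.e (f y)) := (B.ax5 B.e (f y)).mp hy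
  have hax1 := B.ax1 (f x) B.e (f y)
  -- e ≤ (fx→e) → ((e→fy) → (fx→fy))
  have h3 : B.le B.e (B.imp (B.imp B.e (f y)) (B.imp (f x) (f y))) :=
    B.ax6 _ _ h1 ((B.ax5 _ _).mpr hax1)
  have h4 : B.le B.e (B.imp (f x) (f y)) :=
    B.ax6 _ _ h2 ((B.ax5 _ _).mpr h3)
  rw [hom]; exact h4
end

section
/- Let f: X → Y be a surjective ordered homomorphism between OBCI-algebras satisfying: e_Y ≤_Y f(x) implies e_X ≤_X x, for all x ∈ X. If F is an ordered subalgebra of X, then f(F) is an ordered subalgebra of Y. -/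
theorem stmt_15 {X Y : Type*} (A : OBCI X) (B : OBCI Y) (f : X → Y)
    (hom : ∀ x y : X, f (A.imp x y) = B.imp (f x) (f y))
    (omap : ∀ x y : X, A.le A.e (A.imp x y) → B.le B.e (B.imp (f x) (f y)))
    (hsurj : Function.Surjective f)
    (hcond : ∀ x : X, B.le B.e (f x) → A.le A.e x)
    (F : Set X)
    (hF : ∀ x y : X, x ∈ F → y ∈ F → A.le A.e x → A.le A.e y → A.imp x y ∈ F) :
    ∀ a b : Y, a ∈ f '' F → b ∈ f '' F → B.le B.e a → B.le B.e b →
      B.imp a b ∈ f '' F := by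
  rintro a b ⟨x, hx, rfl⟩ ⟨y, hy, rfl⟩ ha hb
  exact ⟨A.imp x y, hF x y hx hy (hcond x ha) (hcond y hb), hom x y⟩
end

section
/- Let f: X → Y be an ordered homomorphism between OBCI-algebras. Then ker(f) = {x ∈ X : e_Y ≤_Y f(x)} is a filter of X: it contains e_X, and if x →_X y ∈ ker(f) and x ∈ ker(f), then y ∈ ker(f). -/
/-- In any OBCI-algebra, e ≤ (e → y) → y. -/
lemma OBCI.star {X : Type*} (A : OBCI X) (y : X) :
    A.le A.e (A.imp (A.imp A.e y) y) :=
  (A.ax5 _ _).mpr (A.ax2 A.e y)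

/-- Modus ponens under e: from e ≤ u and e ≤ u → v, get e ≤ v. -/
lemma OBCI.mp' {X : Type*} (A : OBCI X) {u v : X}
    (hu : A.le A.e u) (huv : A.le A.e (A.imp u v)) : A.le A.e v :=
  A.ax6 _ _ hu ((A.ax5 _ _).mpr huv)

theorem stmt_16 {X Y : Type*} (A : OBCI X) (B : OBCI Y) (f : X → Y)
    (hom : ∀ x y : X, f (A.imp x y) = B.imp (f x) (f y))
    (omap : ∀ x y : X, A.le A.e (A.imp x y) → B.le B.e (B.imp (f x) (f y))) :
    A.e ∈ {z : X | B.le B.e (f z)} ∧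
      ∀ x y : X, A.imp x y ∈ {z : X | B.le B.e (f z)} → x ∈ {z : X | B.le B.e (f z)} →
        y ∈ {z : X | B.le B.e (f z)} := by
  constructor
  · -- let u = e → e; then e ≤ u → e, so B.e ≤ f u → f e; and B.e ≤ f u by omap on ax3.
    have hu : B.le B.e (B.imp (f A.e) (f A.e)) := omap A.e A.e (A.ax3 A.e)
    have h2 : B.le B.e (B.imp (f (A.imp A.e A.e)) (f A.e)) :=
      omap (A.imp A.e A.e) A.e (A.star A.e)
    rw [hom] at h2
    exact B.mp' hu h2
  · intro x y hxy hx
    simp only [Set.mem_setOf_eq, hom] at *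
    exact B.mp' hx hxy
end
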